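/- arXiv:1912.12904 — 8 statements merged into one kernel-verified Lean document; each statement's English description precedes it below -/
import Mathlib

section
/- Let A be a symmetric real n×n matrix. Then every matrix B with A − I ≤ B ≤ A + I (entrywise) is invertible if and only if every eigenvalue λ of A satisfies |λ| > 1. -/
/-!
The matrices `B` with `A - I ≤ B ≤ A + I` are exactly the `A + D` with `D` diagonal and
`|D i i| ≤ 1`. If some eigenvalue satisfies `|λ| ≤ 1`, then `D = -λ I` gives the singular
member `A - λ I`. Conversely, expanding in an orthonormal eigenbasis of `A` shows
`‖A v‖ ≥ (min |λ|) ‖v‖`, so if every `|λ| > 1` then `‖A v‖ > ‖v‖ ≥ ‖D v‖` for `v ≠ 0`,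
and `(A + D) v = 0` forces `v = 0`.
-/

open Matrix WithLp

namespace Matrix

variable {n : Type*} [DecidableEq n]

theorem forall_sub_one_le_and_le_add_one_iff {A B : Matrix n n ℝ} :
    ((∀ i j, (A - 1) i j ≤ B i j) ∧ ∀ i j, B i j ≤ (A + 1) i j) ↔
      ∃ d : n → ℝ, (∀ i, |d i| ≤ 1) ∧ B = A + diagonal d := by
  constructor
  · rintro ⟨hlo, hhi⟩
    refine ⟨fun i ↦ B i i - A i i, fun i ↦ abs_le.2 ⟨?_, ?_⟩, ?_⟩
    · simpa using hlo i i
    · simpa [add_comm] using hhi i i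
    · ext i j
      rcases eq_or_ne i j with rfl | hij
      · simp
      · simpa [hij] using le_antisymm (by simpa [hij] using hhi i j) (by simpa [hij] using hlo i j)
  · rintro ⟨d, hd, rfl⟩
    refine ⟨fun i j ↦ ?_, fun i j ↦ ?_⟩ <;> rcases eq_or_ne i j with rfl | hij
    all_goals simp [*]
    · linarith [(abs_le.1 (hd i)).1]
    · linarith [(abs_le.1 (hd i)).2]

variable [Fintype n] {𝕜 : Type*} [RCLike 𝕜]

open scoped Matrix.Norms.L2Operator in
theorem norm_diagonal_mulVec_le {d : n → 𝕜} (hd : ∀ i, ‖d i‖ ≤ 1) (v : n → 𝕜) :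
    ‖toLp 2 (diagonal d *ᵥ v)‖ ≤ ‖toLp 2 v‖ :=
  calc ‖toLp 2 (diagonal d *ᵥ v)‖ ≤ ‖diagonal d‖ * ‖toLp 2 v‖ := l2_opNorm_mulVec _ (toLp 2 v)
    _ ≤ 1 * ‖toLp 2 v‖ := by
      rw [l2_opNorm_diagonal]
      gcongr
      exact (pi_norm_le_iff_of_nonneg zero_le_one).2 hd
    _ = ‖toLp 2 v‖ := one_mul _

theorem isUnit_add_diagonal_of_norm_lt_norm_mulVec {A : Matrix n n 𝕜}
    (hA : ∀ v : n → 𝕜, v ≠ 0 → ‖toLp 2 v‖ < ‖toLp 2 (A *ᵥ v)‖) {d : n → 𝕜}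
    (hd : ∀ i, ‖d i‖ ≤ 1) : IsUnit (A + diagonal d) := by
  rw [isUnit_iff_isUnit_det, isUnit_iff_ne_zero]
  intro hdet
  obtain ⟨v, hv, hker⟩ := exists_mulVec_eq_zero_iff.2 hdet
  have hAv : A *ᵥ v = -(diagonal d *ᵥ v) := by
    rwa [add_mulVec, add_eq_zero_iff_eq_neg] at hker
  have hle := norm_diagonal_mulVec_le hd v
  rw [← norm_neg, ← toLp_neg, ← hAv] at hle
  exact (hA v hv).not_ge hle

namespace IsHermitian

variable {A : Matrix n n 𝕜} (hA : A.IsHermitian)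

theorem inner_eigenvectorBasis_mulVec (j : n) (v : n → 𝕜) :
    inner 𝕜 (hA.eigenvectorBasis j) (toLp 2 (A *ᵥ v)) =
      hA.eigenvalues j * inner 𝕜 (hA.eigenvectorBasis j) (toLp 2 v) := by
  have hsymm := isSymmetric_toEuclideanLin_iff.2 hA (hA.eigenvectorBasis j) (toLp 2 v)
  have heig : toEuclideanLin A (hA.eigenvectorBasis j) =
      (hA.eigenvalues j : 𝕜) • hA.eigenvectorBasis j := by
    rw [toLpLin_apply, hA.mulVec_eigenvectorBasis, RCLike.real_smul_eq_coe_smul (K := 𝕜)]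
    rfl
  rw [heig, inner_smul_left, RCLike.conj_ofReal] at hsymm
  exact hsymm.symm

theorem mul_norm_le_norm_mulVec {c : ℝ} (hc : 0 ≤ c) (h : ∀ i, c ≤ |hA.eigenvalues i|)
    (v : n → 𝕜) : c * ‖toLp 2 v‖ ≤ ‖toLp 2 (A *ᵥ v)‖ := by
  set b := hA.eigenvectorBasis
  refine le_of_sq_le_sq ?_ (norm_nonneg _)
  rw [mul_pow, ← b.sum_sq_norm_inner_right, ← b.sum_sq_norm_inner_right, Finset.mul_sum]
  gcongr with j
  rw [hA.inner_eigenvectorBasis_mulVec, norm_mul, mul_pow, RCLike.norm_ofReal]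
  gcongr
  exact h j

theorem norm_lt_norm_mulVec (h : ∀ i, 1 < |hA.eigenvalues i|) {v : n → 𝕜} (hv : v ≠ 0) :
    ‖toLp 2 v‖ < ‖toLp 2 (A *ᵥ v)‖ := by
  have : Nonempty n := by
    by_contra hn
    exact hv (funext fun i ↦ (not_nonempty_iff.1 hn).elim i)
  obtain ⟨i₀, -, hmin⟩ :=
    Finset.univ.exists_min_image (fun i ↦ |hA.eigenvalues i|) Finset.univ_nonempty
  have hpos : 0 < ‖toLp 2 v‖ := by simpa using hv
  calc ‖toLp 2 v‖ < |hA.eigenvalues i₀| * ‖toLp 2 v‖ := lt_mul_of_one_lt_left hpos (h i₀)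
    _ ≤ ‖toLp 2 (A *ᵥ v)‖ :=
      hA.mul_norm_le_norm_mulVec (abs_nonneg _) (fun i ↦ hmin i (Finset.mem_univ i)) v

theorem not_isUnit_sub_eigenvalue (i : n) :
    ¬IsUnit (A - diagonal fun _ ↦ (hA.eigenvalues i : 𝕜)) := by
  have h := spectrum.mem_iff.1 (hA.eigenvalues_mem_spectrum_real i)
  rwa [algebraMap_eq_diagonal, ← IsUnit.neg_iff, neg_sub] at h

end IsHermitian

end Matrix

theorem stmt_1 (n : ℕ) (A : Matrix (Fin n) (Fin n) ℝ) (hA : A.IsHermitian) :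
    (∀ B : Matrix (Fin n) (Fin n) ℝ,
        (∀ i j, (A - 1) i j ≤ B i j) → (∀ i j, B i j ≤ (A + 1) i j) → IsUnit B) ↔
      ∀ i, 1 < |hA.eigenvalues i| := by
  constructor
  · intro hreg i
    by_contra! hle
    obtain ⟨hlo, hhi⟩ := (forall_sub_one_le_and_le_add_one_iff (A := A)).2
      ⟨fun _ ↦ -hA.eigenvalues i, fun _ ↦ by rwa [abs_neg], rfl⟩
    apply hA.not_isUnit_sub_eigenvalue i
    convert hreg _ hlo hhi using 1
    simp [sub_eq_add_neg]
  · intro hev B hlo hhi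
    obtain ⟨d, hd, rfl⟩ := forall_sub_one_le_and_le_add_one_iff.1 ⟨hlo, hhi⟩
    exact isUnit_add_diagonal_of_norm_lt_norm_mulVec (fun v hv ↦ hA.norm_lt_norm_mulVec hev hv) hd
end

section
/- Let A be an invertible n×n real matrix and let D be a diagonal matrix with diagonal entries in {−1, 1}. If ‖|A⁻¹|‖ < 1 for a monotone matrix norm ‖·‖ (where |A⁻¹| is the entrywise absolute value), then A − D is invertible and ‖(A − D)⁻¹‖ ≤ ‖A⁻¹‖ / (1 − ‖|A⁻¹|‖). -/
/-!
Put `B = A⁻¹ D`, so that `A - D = A (1 - B)` and `|B| = |A⁻¹|`. Entrywise `|B ^ k| ≤ |A⁻¹| ^ k`,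
and `N (|A⁻¹| ^ k) ≤ N |A⁻¹| ^ k → 0`. A monotone norm controls every entry of a nonnegative
matrix, so `B ^ k → 0`, which rules out a fixed vector `B v = v ≠ 0`: `1 - B` is invertible.
Finally `X = (A - D)⁻¹` solves `X = A⁻¹ + B X`, whence `N X ≤ N A⁻¹ + N |A⁻¹| * N X`.
-/

open Filter Topology

namespace Matrix

variable {ι : Type*} [Fintype ι] [DecidableEq ι]

section Dominated

variable {R : Type*} [Ring R] [LinearOrder R] [IsStrictOrderedRing R]

theorem abs_mul_apply_le {l m n : Type*} [Fintype m] {B : Matrix l m R} {C : Matrix m n R}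
    {M : Matrix l m R} {P : Matrix m n R} (hB : ∀ i j, |B i j| ≤ M i j)
    (hC : ∀ i j, |C i j| ≤ P i j) (i : l) (j : n) : |(B * C) i j| ≤ (M * P) i j := by
  simp only [mul_apply]
  refine (Finset.abs_sum_le_sum_abs _ _).trans (Finset.sum_le_sum fun k _ => ?_)
  rw [abs_mul]
  exact mul_le_mul (hB i k) (hC k j) (abs_nonneg _) ((abs_nonneg _).trans (hB i k))

theorem abs_pow_apply_le {B M : Matrix ι ι R} (hB : ∀ i j, |B i j| ≤ M i j) (k : ℕ) (i j : ι) :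
    |(B ^ k) i j| ≤ (M ^ k) i j := by
  induction k generalizing i j with
  | zero => by_cases h : i = j <;> simp [h]
  | succ k ih => simpa only [pow_succ] using abs_mul_apply_le ih hB i j

end Dominated

theorem isUnit_one_sub_of_tendsto_pow {K : Type*} [Field K] [TopologicalSpace K]
    [IsTopologicalRing K] [T2Space K] {B : Matrix ι ι K}
    (hB : Tendsto (fun k : ℕ => B ^ k) atTop (𝓝 0)) : IsUnit (1 - B) := by
  rw [isUnit_iff_isUnit_det, isUnit_iff_ne_zero]
  intro hdet
  obtain ⟨v, hv, hBv⟩ := exists_mulVec_eq_zero_iff.mpr hdet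
  have hfix : ∀ k : ℕ, (B ^ k) *ᵥ v = v := by
    rw [sub_mulVec, one_mulVec, sub_eq_zero] at hBv
    intro k
    induction k with
    | zero => simp
    | succ k ih => rw [pow_succ, ← mulVec_mulVec, ← hBv, ih]
  have hlim : Tendsto (fun k : ℕ => (B ^ k) *ᵥ v) atTop (𝓝 (0 *ᵥ v)) :=
    ((continuous_id.matrix_mulVec continuous_const).tendsto 0).comp hB
  simp only [hfix, zero_mulVec] at hlim
  exact hv (tendsto_nhds_unique tendsto_const_nhds hlim)

section MonotoneNorm

variable (N : RingNorm (Matrix ι ι ℝ))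
  (hmono : ∀ B C : Matrix ι ι ℝ, (∀ i j, |B i j| ≤ C i j) → N B ≤ N C)
include hmono

theorem tendsto_of_nonneg_of_tendsto_norm {P : ℕ → Matrix ι ι ℝ} (hP : ∀ k i j, 0 ≤ P k i j)
    (hN : Tendsto (fun k => N (P k)) atTop (𝓝 0)) : Tendsto P atTop (𝓝 0) := by
  refine tendsto_pi_nhds.2 fun i => tendsto_pi_nhds.2 fun j => ?_
  refine tendsto_order.2 ⟨fun a ha => Eventually.of_forall fun k => ha.trans_le (hP k i j),
    fun δ hδ => ?_⟩
  have hsingle : 0 < N (single i j δ) := map_pos_of_ne_zero N fun h => hδ.ne' <| by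
    simpa using congr_fun (congr_fun h i) j
  -- an entry `δ ≤ P k i j` would give `N (single i j δ) ≤ N (P k)` by monotonicity
  filter_upwards [hN.eventually (gt_mem_nhds hsingle)] with k hk
  by_contra! hle
  refine hk.not_ge (hmono _ _ fun i' j' => ?_)
  by_cases h : i = i' ∧ j = j'
  · obtain ⟨rfl, rfl⟩ := h
    simpa [abs_of_pos hδ] using hle
  · simpa [single_apply, h] using hP k i' j'

theorem tendsto_pow_of_abs_le {B M : Matrix ι ι ℝ} (hB : ∀ i j, |B i j| ≤ M i j) (hM : N M < 1) :
    Tendsto (fun k : ℕ => B ^ k) atTop (𝓝 0) := by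
  have hMpow : Tendsto (fun k : ℕ => M ^ k) atTop (𝓝 0) := by
    refine tendsto_of_nonneg_of_tendsto_norm N hmono
      (fun k i j => (abs_nonneg _).trans (abs_pow_apply_le hB k i j)) ?_
    refine (tendsto_add_atTop_iff_nat 1).1 (squeeze_zero (fun _ => apply_nonneg N _)
      (fun k => map_pow_le_pow N M k.succ_ne_zero) ?_)
    exact (tendsto_pow_atTop_nhds_zero_of_lt_one (apply_nonneg N M) hM).comp
      (tendsto_add_atTop_nat 1)
  refine tendsto_pi_nhds.2 fun i => tendsto_pi_nhds.2 fun j => ?_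
  exact squeeze_zero_norm (fun k => abs_pow_apply_le hB k i j)
    ((continuous_apply_apply i j).tendsto 0 |>.comp hMpow)

end MonotoneNorm

end Matrix

theorem map_le_div_one_sub_of_eq_add_mul {R F : Type*} [Ring R] [FunLike F R ℝ]
    [RingSeminormClass F R ℝ] (N : F)
    {X Y B : R} {m : ℝ} (hX : X = Y + B * X) (hB : N B ≤ m) (hm : m < 1) :
    N X ≤ N Y / (1 - m) := by
  have : N X ≤ N Y + m * N X := calc
    N X = N (Y + B * X) := congrArg N hX
    _ ≤ N Y + N B * N X := (map_add_le_add N _ _).trans (by grw [map_mul_le_mul N])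
    _ ≤ N Y + m * N X := by gcongr
  rw [le_div_iff₀ (sub_pos.2 hm)]
  linarith

theorem stmt_4 (n : ℕ) (A : Matrix (Fin n) (Fin n) ℝ) (hA : IsUnit A)
    (N : RingNorm (Matrix (Fin n) (Fin n) ℝ))
    (hmono : ∀ B C : Matrix (Fin n) (Fin n) ℝ, (∀ i j, |B i j| ≤ C i j) → N B ≤ N C)
    (d : Fin n → ℝ) (hd : ∀ i, |d i| = 1)
    (habs : N (Matrix.of fun i j => |A⁻¹ i j|) < 1) :
    IsUnit (A - Matrix.diagonal d) ∧
      N (A - Matrix.diagonal d)⁻¹ ≤ N A⁻¹ / (1 - N (Matrix.of fun i j => |A⁻¹ i j|)) := by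
  set D := Matrix.diagonal d
  set M := Matrix.of fun i j => |A⁻¹ i j|
  set B := A⁻¹ * D
  have hBM : ∀ i j, |B i j| ≤ M i j := fun i j => by
    simp [B, D, M, Matrix.mul_diagonal, abs_mul, hd]
  have hfactor : A - D = A * (1 - B) := by
    rw [mul_sub, mul_one, Matrix.mul_nonsing_inv_cancel_left _ _ ((A.isUnit_iff_isUnit_det).mp hA)]
  have hunit : IsUnit (A - D) := hfactor ▸ hA.mul
    (Matrix.isUnit_one_sub_of_tendsto_pow (Matrix.tendsto_pow_of_abs_le N hmono hBM habs))
  refine ⟨hunit, map_le_div_one_sub_of_eq_add_mul N ?_ (hmono B M hBM) habs⟩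
  have hinv : A⁻¹ = (1 - B) * (A - D)⁻¹ := Matrix.inv_eq_right_inv <| by
    rw [← mul_assoc, ← hfactor, Matrix.mul_nonsing_inv _ (((A - D).isUnit_iff_isUnit_det).mp hunit)]
  rw [hinv, sub_mul, one_mul, sub_add_cancel]
end

section
/- Let A be an invertible n×n real matrix with ρ(|A⁻¹|) < 1 (spectral radius of the entrywise absolute value of A⁻¹). Suppose x⋆ satisfies Ax⋆ − b = |x⋆| (entrywise absolute value). Then for every x ∈ ℝⁿ, the entrywise inequality |x − x⋆| ≤ (I − |A⁻¹|)⁻¹ |A⁻¹| · |Ax − b − |x|| holds, where (I − |A⁻¹|)⁻¹ exists and is entrywise nonnegative. -/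
open scoped ENNReal

/-- The spectral radius of a real square matrix (via its complex spectrum). -/
noncomputable def specRad {n : ℕ} (M : Matrix (Fin n) (Fin n) ℝ) : ℝ≥0∞ :=
  spectralRadius ℂ (M.map (Complex.ofReal ·))

/-- Entrywise absolute value of a matrix. -/
def matAbs {n : ℕ} (M : Matrix (Fin n) (Fin n) ℝ) : Matrix (Fin n) (Fin n) ℝ :=
  Matrix.of fun i j => |M i j|

/-!
Since `ρ(|A⁻¹|) < 1`, Gelfand's formula makes the Neumann series `∑ |A⁻¹| ^ k` converge, so
`I - |A⁻¹|` is invertible with the entrywise nonnegative inverse `∑ |A⁻¹| ^ k`. With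
`e = |x - x⋆|` and `r = |A x - b - |x||`, the equation for `x⋆` gives
`A (x - x⋆) = (A x - b - |x|) + (|x| - |x⋆|)`, hence `e ≤ |A⁻¹| (r + e)`, i.e.
`(I - |A⁻¹|) e ≤ |A⁻¹| r`; applying the nonnegative inverse yields the bound.
-/

open Filter

theorem summable_pow_of_spectralRadius_lt_one {A : Type*} [NormedRing A] [NormedAlgebra ℂ A]
    [CompleteSpace A] {a : A} (h : spectralRadius ℂ a < 1) : Summable (a ^ ·) := by
  obtain ⟨r, hρr, hr1⟩ := ENNReal.lt_iff_exists_nnreal_btwn.mp h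
  have hroot : ∀ᶠ k : ℕ in atTop, (‖a ^ k‖₊ : ℝ≥0∞) ^ (1 / k : ℝ) < r :=
    (spectrum.pow_nnnorm_pow_one_div_tendsto_nhds_spectralRadius a).eventually_lt_const hρr
  refine .of_norm_bounded_eventually_nat
    (summable_geometric_of_lt_one r.coe_nonneg (mod_cast hr1)) ?_
  filter_upwards [hroot, eventually_ne_atTop 0] with k hk hk0
  have : ‖a ^ k‖₊ ≤ r ^ k := by
    have := ENNReal.rpow_le_rpow hk.le (Nat.cast_nonneg (α := ℝ) k)
    rwa [← ENNReal.rpow_mul, one_div_mul_cancel (by exact_mod_cast hk0), ENNReal.rpow_one,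
      ENNReal.rpow_natCast, ← ENNReal.coe_pow, ENNReal.coe_le_coe] at this
  exact_mod_cast this

section

attribute [local instance] Matrix.linftyOpNormedRing Matrix.linftyOpNormedAlgebra

theorem Matrix.summable_pow_of_specRad_lt_one {n : ℕ} {M : Matrix (Fin n) (Fin n) ℝ}
    (h : specRad M < 1) : Summable (M ^ ·) := by
  have hc : Summable ((M.map (Complex.ofReal ·)) ^ ·) := summable_pow_of_spectralRadius_lt_one h
  refine Pi.summable.mpr fun i => Pi.summable.mpr fun j => Complex.summable_ofReal.mp ?_
  exact (Pi.summable.mp (Pi.summable.mp hc i) j).congr fun k =>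
    (congrFun (congrFun (M.map_pow Complex.ofRealHom k) i) j).symm

end

theorem Summable.isUnit_one_sub {R : Type*} [Ring R] [TopologicalSpace R] [IsTopologicalRing R]
    [T2Space R] {x : R} (h : Summable (x ^ ·)) : IsUnit (1 - x) :=
  ⟨⟨1 - x, ∑' k, x ^ k, h.one_sub_mul_tsum_pow, h.tsum_pow_mul_one_sub⟩, rfl⟩

namespace Matrix

variable {ι R : Type*} [Fintype ι]

theorem inv_one_sub_apply_nonneg [DecidableEq ι] [CommRing R] [PartialOrder R] [IsOrderedRing R]
    [TopologicalSpace R] [IsTopologicalRing R] [OrderClosedTopology R] {M : Matrix ι ι R}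
    (hM : ∀ i j, 0 ≤ M i j) (hsum : Summable (M ^ ·)) (i j : ι) : 0 ≤ (1 - M)⁻¹ i j := by
  rw [inv_eq_right_inv hsum.one_sub_mul_tsum_pow]
  exact (Pi.hasSum.mp (Pi.hasSum.mp hsum.hasSum i) j).nonneg fun k => pow_apply_nonneg hM k i j

theorem mulVec_mono [Semiring R] [PartialOrder R] [IsOrderedRing R] {S : Matrix ι ι R}
    (hS : ∀ i j, 0 ≤ S i j) {u v : ι → R} (huv : u ≤ v) : S *ᵥ u ≤ S *ᵥ v :=
  fun i => dotProduct_le_dotProduct_of_nonneg_left huv (hS i)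

end Matrix

open Matrix

theorem matAbs_apply_nonneg {n : ℕ} (M : Matrix (Fin n) (Fin n) ℝ) (i j : Fin n) :
    0 ≤ matAbs M i j :=
  abs_nonneg _

theorem abs_mulVec_le_matAbs_mulVec {n : ℕ} (M : Matrix (Fin n) (Fin n) ℝ) (v : Fin n → ℝ) :
    |M *ᵥ v| ≤ matAbs M *ᵥ |v| := fun i => by
  simp only [Pi.abs_apply, mulVec, dotProduct, matAbs, of_apply, ← abs_mul]
  exact Finset.abs_sum_le_sum_abs _ _

theorem abs_mulVec_sub_le {n : ℕ} {A : Matrix (Fin n) (Fin n) ℝ} {b xstar : Fin n → ℝ}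
    (hsol : A *ᵥ xstar - b = |xstar|) (x : Fin n → ℝ) :
    |A *ᵥ (x - xstar)| ≤ |(A *ᵥ x - b - |x|)| + |x - xstar| := by
  have hsplit : A *ᵥ (x - xstar) = (A *ᵥ x - b - |x|) + (|x| - |xstar|) := by
    rw [mulVec_sub, ← hsol]; abel
  rw [hsplit]
  exact (abs_add_le _ _).trans (add_le_add_right (abs_abs_sub_abs_le x xstar) _)

theorem abs_sub_le_inv_one_sub_mul_matAbs_mulVec {n : ℕ} {A : Matrix (Fin n) (Fin n) ℝ}
    (hA : IsUnit A) (hunit : IsUnit (1 - matAbs A⁻¹))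
    (hnonneg : ∀ i j, 0 ≤ (1 - matAbs A⁻¹)⁻¹ i j) {b xstar : Fin n → ℝ}
    (hsol : A *ᵥ xstar - b = |xstar|) (x : Fin n → ℝ) :
    |x - xstar| ≤ ((1 - matAbs A⁻¹)⁻¹ * matAbs A⁻¹) *ᵥ |(A *ᵥ x - b - |x|)| := by
  set M := matAbs A⁻¹
  set e := |x - xstar|
  set r := |(A *ᵥ x - b - |x|)|
  have he : e ≤ M *ᵥ r + M *ᵥ e := calc
    e = |A⁻¹ *ᵥ (A *ᵥ (x - xstar))| := by
      rw [mulVec_mulVec, nonsing_inv_mul _ ((isUnit_iff_isUnit_det A).mp hA), one_mulVec]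
    _ ≤ M *ᵥ |A *ᵥ (x - xstar)| := abs_mulVec_le_matAbs_mulVec _ _
    _ ≤ M *ᵥ (r + e) := mulVec_mono (matAbs_apply_nonneg _) (abs_mulVec_sub_le hsol x)
    _ = M *ᵥ r + M *ᵥ e := mulVec_add _ _ _
  have hfix : (1 - M) *ᵥ e ≤ M *ᵥ r := by
    rw [sub_mulVec, one_mulVec]; exact sub_le_iff_le_add.mpr he
  calc e = (1 - M)⁻¹ *ᵥ ((1 - M) *ᵥ e) := by
        rw [mulVec_mulVec, nonsing_inv_mul _ ((isUnit_iff_isUnit_det _).mp hunit), one_mulVec]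
    _ ≤ (1 - M)⁻¹ *ᵥ (M *ᵥ r) := mulVec_mono hnonneg hfix
    _ = ((1 - M)⁻¹ * M) *ᵥ r := mulVec_mulVec _ _ _

theorem stmt_5 (n : ℕ) (A : Matrix (Fin n) (Fin n) ℝ) (hA : IsUnit A)
    (hρ : specRad (matAbs A⁻¹) < 1)
    (b xstar : Fin n → ℝ) (hsol : A.mulVec xstar - b = fun i => |xstar i|) :
    IsUnit (1 - matAbs A⁻¹) ∧
      (∀ i j, 0 ≤ (1 - matAbs A⁻¹)⁻¹ i j) ∧
      ∀ x : Fin n → ℝ, ∀ i,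
        |x i - xstar i| ≤
          ((1 - matAbs A⁻¹)⁻¹ * matAbs A⁻¹).mulVec
            (fun i => abs (A.mulVec x i - b i - |x i|)) i := by
  have hsum := summable_pow_of_specRad_lt_one hρ
  have hunit := hsum.isUnit_one_sub
  have hnonneg := inv_one_sub_apply_nonneg (matAbs_apply_nonneg _) hsum
  exact ⟨hunit, hnonneg, abs_sub_le_inv_one_sub_mul_matAbs_mulVec hA hunit hnonneg hsol⟩
end

section
/- Let A be an n×n real matrix such that for every sign vector d (|d_i| ≤ 1) the matrix A + diag(d) is invertible, and define c(A) = max over ‖d‖_∞ ≤ 1 of ‖(A − diag(d))⁻¹‖ for a fixed operator norm. If x₁ solves Ax₁ − |x₁| = b₁ and x₂ solves Ax₂ − |x₂| = b₂, then ‖x₁ − x₂‖ ≤ c(A)·‖b₁ − b₂‖. -/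
open Matrix Metric Set

/-!
Subtracting the two equations and writing `|x₁| - |x₂| = D (x₁ - x₂)` with `D` diagonal and
`‖D‖∞ ≤ 1` gives `(A - D)(x₁ - x₂) = b₁ - b₂`; regularity makes `A - D` invertible, so
`x₁ - x₂ = (A - D)⁻¹ (b₁ - b₂)` is bounded by the induced norm of `(A - D)⁻¹`. The supremum
`c(A)` is finite by compactness: `d ↦ (A - diag d)⁻¹` is continuous on the unit ball, and a
definite seminorm on a finite-dimensional space is comparable to the norm.
-/

section Seminorm

variable {E : Type*} [NormedAddCommGroup E] [NormedSpace ℝ E] [FiniteDimensional ℝ E]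

theorem Seminorm.continuous_of_finiteDimensional (p : Seminorm ℝ E) : Continuous p :=
  continuousOn_univ.mp (p.convexOn.continuousOn isOpen_univ)

theorem Seminorm.exists_pos_mul_norm_le (p : Seminorm ℝ E) (hp : ∀ x, p x = 0 → x = 0) :
    ∃ c > 0, ∀ x, c * ‖x‖ ≤ p x := by
  cases subsingleton_or_nontrivial E
  · exact ⟨1, one_pos, fun x => by simp [Subsingleton.elim x 0]⟩
  obtain ⟨x₀, hx₀, hmin⟩ := (isCompact_sphere (0 : E) 1).exists_isMinOn
    (NormedSpace.sphere_nonempty.2 zero_le_one) p.continuous_of_finiteDimensional.continuousOn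
  have hx₀ne : x₀ ≠ 0 := ne_zero_of_mem_unit_sphere ⟨x₀, hx₀⟩
  refine ⟨p x₀, (apply_nonneg p x₀).lt_of_ne fun h => hx₀ne (hp _ h.symm), fun x => ?_⟩
  rcases eq_or_ne x 0 with rfl | hx
  · simp
  have hsx : ‖x‖⁻¹ • x ∈ sphere (0 : E) 1 := by
    simp [norm_smul, norm_ne_zero_iff.2 hx]
  have : p x₀ ≤ p (‖x‖⁻¹ • x) := hmin hsx
  simp only [map_smul_eq_mul, norm_inv, norm_norm] at this
  rwa [le_inv_mul_iff₀ (norm_pos_iff.2 hx), mul_comm] at this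

end Seminorm

theorem continuousOn_matrix_inv {ι R : Type*} [Fintype ι] [DecidableEq ι] [Field R]
    [TopologicalSpace R] [IsTopologicalDivisionRing R] :
    ContinuousOn (Inv.inv : Matrix ι ι R → Matrix ι ι R) {M | IsUnit M} := by
  intro M hM
  refine (continuousAt_matrix_inv M ?_).continuousWithinAt
  rw [Ring.inverse_eq_inv']
  exact continuousAt_inv₀ ((isUnit_iff_isUnit_det M).1 hM).ne_zero

namespace Matrix

variable {ι : Type*} [Fintype ι]

noncomputable def inducedOpNorm (p : Seminorm ℝ (ι → ℝ)) (M : Matrix ι ι ℝ) : ℝ :=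
  sSup {s | ∃ x, p x = 1 ∧ s = p (M *ᵥ x)}

theorem le_inducedOpNorm_mul {p : Seminorm ℝ (ι → ℝ)} (hp : ∀ x, p x = 0 → x = 0)
    {M : Matrix ι ι ℝ} (hM : BddAbove {s | ∃ x, p x = 1 ∧ s = p (M *ᵥ x)}) (v : ι → ℝ) :
    p (M *ᵥ v) ≤ inducedOpNorm p M * p v := by
  rcases eq_or_ne v 0 with rfl | hv
  · simp
  have hpv : 0 < p v := (apply_nonneg p v).lt_of_ne fun h => hv (hp v h.symm)
  have hunit : p ((p v)⁻¹ • v) = 1 := by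
    rw [map_smul_eq_mul, Real.norm_eq_abs, abs_of_pos (inv_pos.2 hpv), inv_mul_cancel₀ hpv.ne']
  have := le_csSup hM ⟨_, hunit, rfl⟩
  rw [mulVec_smul, map_smul_eq_mul, Real.norm_eq_abs, abs_of_pos (inv_pos.2 hpv)] at this
  rwa [inv_mul_le_iff₀ hpv, mul_comm] at this

theorem exists_bound_of_isCompact (p : Seminorm ℝ (ι → ℝ)) (hp : ∀ x, p x = 0 → x = 0)
    {K : Set (Matrix ι ι ℝ)} (hK : IsCompact K) :
    ∃ C, 0 ≤ C ∧ ∀ M ∈ K, ∀ x, p x = 1 → p (M *ᵥ x) ≤ C := by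
  obtain ⟨c, hc, hcp⟩ := p.exists_pos_mul_norm_le hp
  have hcont : Continuous fun q : Matrix ι ι ℝ × (ι → ℝ) => p (q.1 *ᵥ q.2) :=
    p.continuous_of_finiteDimensional.comp (continuous_fst.matrix_mulVec continuous_snd)
  obtain ⟨C, hC⟩ := (hK.prod (isCompact_closedBall 0 c⁻¹)).bddAbove_image hcont.continuousOn
  refine ⟨max C 0, le_max_right _ _, fun M hM x hx => le_max_of_le_left
    (hC ⟨(M, x), ⟨hM, mem_closedBall_zero_iff.2 ?_⟩, rfl⟩)⟩
  rw [← one_div, le_div_iff₀ hc, mul_comm]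
  exact hx ▸ hcp x

end Matrix

theorem exists_abs_sub_abs_eq_mul (a b : ℝ) : ∃ δ, |δ| ≤ 1 ∧ |a| - |b| = δ * (a - b) := by
  rcases eq_or_ne a b with rfl | hab
  · exact ⟨0, by simp⟩
  have hab' : a - b ≠ 0 := sub_ne_zero.2 hab
  refine ⟨(|a| - |b|) / (a - b), ?_, (div_mul_cancel₀ _ hab').symm⟩
  rw [abs_div, div_le_one (abs_pos.2 hab')]
  exact abs_abs_sub_abs_le_abs_sub a b

namespace Matrix

variable {ι : Type*} [Fintype ι] [DecidableEq ι]

theorem exists_sub_diagonal_mulVec_eq (A : Matrix ι ι ℝ) (x y : ι → ℝ) :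
    ∃ d : ι → ℝ, ‖d‖ ≤ 1 ∧ (A - diagonal d) *ᵥ (x - y) =
      (A *ᵥ x - fun i => |x i|) - (A *ᵥ y - fun i => |y i|) := by
  choose δ hδ hδxy using fun i => exists_abs_sub_abs_eq_mul (x i) (y i)
  refine ⟨δ, (pi_norm_le_iff_of_nonneg zero_le_one).2 fun i =>
    (Real.norm_eq_abs _).trans_le (hδ i), ?_⟩
  ext i
  simp only [sub_mulVec, mulVec_sub, mulVec_diagonal, Pi.sub_apply]
  linear_combination hδxy i

theorem isUnit_sub_diagonal {A : Matrix ι ι ℝ}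
    (hreg : ∀ d : ι → ℝ, ‖d‖ ≤ 1 → IsUnit (A + diagonal d)) {d : ι → ℝ} (hd : ‖d‖ ≤ 1) :
    IsUnit (A - diagonal d) := by
  have := hreg (-d) (by rwa [norm_neg])
  rw [sub_eq_add_neg, diagonal_neg]
  exact this

theorem isCompact_image_inv_sub_diagonal {A : Matrix ι ι ℝ}
    (hreg : ∀ d : ι → ℝ, ‖d‖ ≤ 1 → IsUnit (A + diagonal d)) :
    IsCompact ((fun d => (A - diagonal d)⁻¹) '' closedBall (0 : ι → ℝ) 1) :=
  (isCompact_closedBall 0 1).image_of_continuousOn <|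
    continuousOn_matrix_inv.comp (by fun_prop : Continuous fun d => A - diagonal d).continuousOn
      fun _ hd => isUnit_sub_diagonal hreg (mem_closedBall_zero_iff.1 hd)

end Matrix

theorem stmt_7 (n : ℕ) (A : Matrix (Fin n) (Fin n) ℝ)
    (vN : Seminorm ℝ (Fin n → ℝ)) (hdef : ∀ x, vN x = 0 → x = 0)
    (hreg : ∀ d : Fin n → ℝ, ‖d‖ ≤ 1 → IsUnit (A + Matrix.diagonal d))
    (b₁ b₂ x₁ x₂ : Fin n → ℝ)
    (h₁ : A.mulVec x₁ - (fun i => |x₁ i|) = b₁)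
    (h₂ : A.mulVec x₂ - (fun i => |x₂ i|) = b₂) :
    vN (x₁ - x₂) ≤
      sSup {r | ∃ d : Fin n → ℝ, ‖d‖ ≤ 1 ∧
          r = sSup {s | ∃ x : Fin n → ℝ, vN x = 1 ∧
                s = vN ((A - Matrix.diagonal d)⁻¹.mulVec x)}} *
        vN (b₁ - b₂) := by
  obtain ⟨d, hd, hdiff⟩ := exists_sub_diagonal_mulVec_eq A x₁ x₂
  have hdet : IsUnit (A - diagonal d).det :=
    (isUnit_iff_isUnit_det _).1 (isUnit_sub_diagonal hreg hd)
  have hsol : x₁ - x₂ = (A - diagonal d)⁻¹ *ᵥ (b₁ - b₂) := by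
    rw [← h₁, ← h₂, ← hdiff, mulVec_mulVec, nonsing_inv_mul _ hdet, one_mulVec]
  obtain ⟨C, hC0, hC⟩ := exists_bound_of_isCompact vN hdef (isCompact_image_inv_sub_diagonal hreg)
  have hbdd : ∀ d' : Fin n → ℝ, ‖d'‖ ≤ 1 →
      ∀ x, vN x = 1 → vN ((A - diagonal d')⁻¹ *ᵥ x) ≤ C := fun d' hd' =>
    hC _ (mem_image_of_mem _ (mem_closedBall_zero_iff.2 hd'))
  calc vN (x₁ - x₂) = vN ((A - diagonal d)⁻¹ *ᵥ (b₁ - b₂)) := by rw [hsol]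
    _ ≤ inducedOpNorm vN (A - diagonal d)⁻¹ * vN (b₁ - b₂) :=
      le_inducedOpNorm_mul hdef ⟨C, by rintro _ ⟨x, hx, rfl⟩; exact hbdd d hd x hx⟩ _
    _ ≤ _ := by
      gcongr
      refine le_csSup ⟨C, ?_⟩ ⟨d, hd, rfl⟩
      rintro _ ⟨d', hd', rfl⟩
      exact Real.sSup_le (by rintro _ ⟨x, hx, rfl⟩; exact hbdd d' hd' x hx) hC0
end

section
/- Let A be an n×n real matrix, r ∈ ℝⁿ with r > 0, and define the norm ‖x‖_r := ‖diag(r)⁻¹ x‖_∞. If α := min_i { |A_ii| − 1 − r_i⁻¹ Σ_{j≠i} r_j |A_ij| } > 0, then for every d with ‖d‖_∞ ≤ 1 and every x with ‖x‖_r = 1, we have ‖(A + diag(d))x‖_r ≥ α; in particular A + diag(d) is invertible with ‖(A + diag(d))⁻¹‖_r ≤ 1/α. -/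
/-- The scaled infinity norm `‖x‖_r = max_i |x_i| / r_i`. -/
noncomputable def rNorm {n : ℕ} (r x : Fin n → ℝ) : ℝ := ⨆ i, |x i| / r i

/-- The matrix norm induced by `rNorm r`. -/
noncomputable def rOpNorm {n : ℕ} (r : Fin n → ℝ) (M : Matrix (Fin n) (Fin n) ℝ) : ℝ :=
  sSup {s | ∃ x : Fin n → ℝ, rNorm r x = 1 ∧ s = rNorm r (M.mulVec x)}

theorem stmt_10 (n : ℕ) (A : Matrix (Fin n) (Fin n) ℝ) (r : Fin n → ℝ) (hr : ∀ i, 0 < r i)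
    (α : ℝ)
    (hα : α = ⨅ i, (|A i i| - 1 - (r i)⁻¹ * ∑ j ∈ Finset.univ.erase i, r j * |A i j|))
    (hα0 : 0 < α) :
    ∀ d : Fin n → ℝ, ‖d‖ ≤ 1 →
      (∀ x : Fin n → ℝ, rNorm r x = 1 → α ≤ rNorm r ((A + Matrix.diagonal d).mulVec x)) ∧
        IsUnit (A + Matrix.diagonal d) ∧
        rOpNorm r (A + Matrix.diagonal d)⁻¹ ≤ 1 / α := by
  intro d hd
  rcases Nat.eq_zero_or_pos n with hn | hn
  · exfalso
    subst hn
    rw [Real.iInf_of_isEmpty] at hα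
    linarith
  have hne : Nonempty (Fin n) := ⟨⟨0, hn⟩⟩
  set B := A + Matrix.diagonal d with hB
  have hbdd : ∀ x : Fin n → ℝ, BddAbove (Set.range fun i => |x i| / r i) :=
    fun x => Set.Finite.bddAbove (Set.finite_range _)
  have hle : ∀ (x : Fin n → ℝ) i, |x i| / r i ≤ rNorm r x := fun x i => le_ciSup (hbdd x) i
  have hnn : ∀ x : Fin n → ℝ, 0 ≤ rNorm r x := fun x => by
    refine le_trans ?_ (hle x (Classical.arbitrary _))
    exact div_nonneg (abs_nonneg _) (hr _).le
  have key : ∀ y : Fin n → ℝ, α * rNorm r y ≤ rNorm r (B.mulVec y) := by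
    intro y
    set t := rNorm r y with ht
    have ht0 : 0 ≤ t := hnn y
    obtain ⟨k, hk⟩ := exists_eq_ciSup_of_finite (f := fun i => |y i| / r i)
    have hk' : |y k| / r k = t := by rw [ht, rNorm]; exact hk
    have hyk : |y k| = t * r k := (div_eq_iff (hr k).ne').mp hk'
    have hyj : ∀ j, |y j| ≤ t * r j := fun j => by
      have := hle y j
      rw [div_le_iff₀ (hr j)] at this
      linarith [this]
    have hαk : α ≤ |A k k| - 1 - (r k)⁻¹ * ∑ j ∈ Finset.univ.erase k, r j * |A k j| := by
      rw [hα]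
      exact ciInf_le (Set.Finite.bddBelow (Set.finite_range _)) k
    have hdk : |d k| ≤ 1 := by
      have h1 := norm_le_pi_norm d k
      simp only [Real.norm_eq_abs] at h1
      linarith
    have hBkk : |A k k| - 1 ≤ |B k k| := by
      have hBe : B k k = A k k + d k := by
        simp [hB, Matrix.diagonal]
      rw [hBe]
      have := abs_add_le (A k k + d k) (-d k)
      simp only [add_neg_cancel_right, abs_neg] at this
      linarith
    have hcomp : (B.mulVec y) k = B k k * y k + ∑ j ∈ Finset.univ.erase k, A k j * y j := by
      rw [Matrix.mulVec, dotProduct]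
      rw [← Finset.add_sum_erase _ _ (Finset.mem_univ k)]
      congr 1
      refine Finset.sum_congr rfl fun j hj => ?_
      have hjk : j ≠ k := Finset.ne_of_mem_erase hj
      simp [hB, Matrix.diagonal, hjk.symm]
    have hS : |∑ j ∈ Finset.univ.erase k, A k j * y j| ≤
        t * ∑ j ∈ Finset.univ.erase k, r j * |A k j| := by
      calc |∑ j ∈ Finset.univ.erase k, A k j * y j|
          ≤ ∑ j ∈ Finset.univ.erase k, |A k j * y j| := Finset.abs_sum_le_sum_abs _ _
        _ ≤ ∑ j ∈ Finset.univ.erase k, t * (r j * |A k j|) := by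
            refine Finset.sum_le_sum fun j _ => ?_
            rw [abs_mul]
            have := mul_le_mul_of_nonneg_left (hyj j) (abs_nonneg (A k j))
            nlinarith [this]
        _ = t * ∑ j ∈ Finset.univ.erase k, r j * |A k j| := by rw [Finset.mul_sum]
    have hBy : t * r k * α ≤ |(B.mulVec y) k| := by
      have h1 : |B k k * y k| - |∑ j ∈ Finset.univ.erase k, A k j * y j| ≤ |(B.mulVec y) k| := by
        rw [hcomp]
        have := abs_add_le (B k k * y k + ∑ j ∈ Finset.univ.erase k, A k j * y j)
          (-(∑ j ∈ Finset.univ.erase k, A k j * y j))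
        simp only [add_neg_cancel_right, abs_neg] at this
        linarith
      have h2 : (|A k k| - 1) * (t * r k) ≤ |B k k * y k| := by
        rw [abs_mul, hyk]
        exact mul_le_mul_of_nonneg_right hBkk (mul_nonneg ht0 (hr k).le)
      have h3 : α ≤ |A k k| - 1 - (r k)⁻¹ * ∑ j ∈ Finset.univ.erase k, r j * |A k j| := hαk
      have hrk := hr k
      have hsum : t * r k * α ≤ (|A k k| - 1) * (t * r k)
          - t * ∑ j ∈ Finset.univ.erase k, r j * |A k j| := by
        have h4 : t * r k * α ≤ t * r k *
            (|A k k| - 1 - (r k)⁻¹ * ∑ j ∈ Finset.univ.erase k, r j * |A k j|) :=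
          mul_le_mul_of_nonneg_left h3 (by positivity)
        have h5 : t * r k * ((r k)⁻¹ * ∑ j ∈ Finset.univ.erase k, r j * |A k j|)
            = t * ∑ j ∈ Finset.univ.erase k, r j * |A k j| := by
          rw [mul_assoc, ← mul_assoc (r k), mul_inv_cancel₀ (hr k).ne', one_mul]
        nlinarith [h4]
      linarith
    have hrk := hr k
    calc α * t = (t * r k * α) / r k := by rw [eq_div_iff hrk.ne']; ring
      _ ≤ |(B.mulVec y) k| / r k := by gcongr
      _ ≤ rNorm r (B.mulVec y) := hle _ k
  -- zero vector norm
  have hzero : ∀ y : Fin n → ℝ, rNorm r y = 0 → y = 0 := by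
    intro y hy
    funext i
    have h1 := hle y i
    rw [hy] at h1
    have h2 : 0 ≤ |y i| / r i := div_nonneg (abs_nonneg _) (hr i).le
    have : |y i| / r i = 0 := le_antisymm h1 h2
    have := (div_eq_zero_iff.mp this).resolve_right (ne_of_gt (hr i))
    simpa using this
  have hrnorm0 : rNorm r (0 : Fin n → ℝ) = 0 := by
    simp only [rNorm, Pi.zero_apply, abs_zero, zero_div, ciSup_const]
  -- invertibility
  have hdet : B.det ≠ 0 := by
    intro h0
    obtain ⟨v, hv, hBv⟩ := (Matrix.exists_mulVec_eq_zero_iff).mpr h0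
    have := key v
    rw [hBv, hrnorm0] at this
    have hv0 : rNorm r v = 0 := le_antisymm (by nlinarith [hnn v]) (hnn v)
    exact hv (hzero v hv0)
  have hUnit : IsUnit B := by
    rw [Matrix.isUnit_iff_isUnit_det]
    exact isUnit_iff_ne_zero.mpr hdet
  refine ⟨fun x hx => by simpa [hx] using key x, hUnit, ?_⟩
  rw [rOpNorm]
  apply Real.sSup_le
  · rintro s ⟨x, hx1, rfl⟩
    have hcancel : B.mulVec (B⁻¹.mulVec x) = x := by
      rw [Matrix.mulVec_mulVec, Matrix.mul_nonsing_inv _ (isUnit_iff_ne_zero.mpr hdet),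
        Matrix.one_mulVec]
    have := key (B⁻¹.mulVec x)
    rw [hcancel, hx1] at this
    rw [le_div_iff₀ hα0]
    linarith
  · positivity
end

section
/- Let M be an n×n M-matrix (i.e., M⁻¹ ≥ 0 entrywise and M_ij ≤ 0 for i ≠ j) with all diagonal entries at most 1, and suppose M − I is invertible. Set A = (M+I)(M−I)⁻¹. Then (A − I)⁻¹ = (1/2)(M − I) ≤ 0 entrywise and (A + I)⁻¹ = (1/2)(I − M⁻¹) ≤ 0 entrywise. -/
theorem stmt_13 (n : ℕ) (M : Matrix (Fin n) (Fin n) ℝ)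
    (hMunit : IsUnit M) (hMinv : ∀ i j, 0 ≤ M⁻¹ i j)
    (hoff : ∀ i j, i ≠ j → M i j ≤ 0)
    (hdiag : ∀ i, M i i ≤ 1) (hMI : IsUnit (M - 1)) :
    (((M + 1) * (M - 1)⁻¹ - 1)⁻¹ = (2⁻¹ : ℝ) • (M - 1) ∧
        ∀ i j, ((M + 1) * (M - 1)⁻¹ - 1)⁻¹ i j ≤ 0) ∧
      (((M + 1) * (M - 1)⁻¹ + 1)⁻¹ = (2⁻¹ : ℝ) • (1 - M⁻¹) ∧
        ∀ i j, ((M + 1) * (M - 1)⁻¹ + 1)⁻¹ i j ≤ 0) := by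
  have hBdet : IsUnit (M - 1).det := (Matrix.isUnit_iff_isUnit_det _).1 hMI
  have hMdet : IsUnit M.det := (Matrix.isUnit_iff_isUnit_det _).1 hMunit
  have hB : (M - 1)⁻¹ * (M - 1) = 1 := Matrix.nonsing_inv_mul _ hBdet
  have hB' : (M - 1) * (M - 1)⁻¹ = 1 := Matrix.mul_nonsing_inv _ hBdet
  have hM : M * M⁻¹ = 1 := Matrix.mul_nonsing_inv _ hMdet
  have hM' : M⁻¹ * M = 1 := Matrix.nonsing_inv_mul _ hMdet
  -- diagonal entries of M⁻¹ are ≥ 1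
  have hdiaginv : ∀ i, (1:ℝ) ≤ M⁻¹ i i := by
    intro i
    have h1 : (M * M⁻¹) i i = 1 := by rw [hM]; simp [Matrix.one_apply]
    have h2 : (M * M⁻¹) i i = ∑ k, M i k * M⁻¹ k i := rfl
    have h3 : ∑ k, M i k * M⁻¹ k i ≤ M i i * M⁻¹ i i := by
      have := Finset.sum_le_sum (s := Finset.univ)
        (f := fun k => M i k * M⁻¹ k i)
        (g := fun k => if k = i then M i i * M⁻¹ i i else 0) ?_
      · simpa using this
      · intro k _
        by_cases hk : k = i
        · subst hk; simp
        · simp only [if_neg hk]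
          exact mul_nonpos_of_nonpos_of_nonneg (hoff i k (Ne.symm hk)) (hMinv k i)
    have h4 : (1:ℝ) ≤ M i i * M⁻¹ i i := by rw [← h1, h2]; exact h3
    calc (1:ℝ) ≤ M i i * M⁻¹ i i := h4
      _ ≤ 1 * M⁻¹ i i := mul_le_mul_of_nonneg_right (hdiag i) (hMinv i i)
      _ = M⁻¹ i i := one_mul _
  have e1 : ((M + 1) * (M - 1)⁻¹ - 1)⁻¹ = (2⁻¹ : ℝ) • (M - 1) := by
    apply Matrix.inv_eq_right_inv
    rw [Matrix.mul_smul, sub_mul, mul_assoc, hB]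
    rw [mul_one, one_mul]
    have h2 : M + 1 - (M - 1) = (2:ℝ) • (1 : Matrix (Fin n) (Fin n) ℝ) := by module
    rw [h2, smul_smul]
    norm_num
  have e2 : ((M + 1) * (M - 1)⁻¹ + 1)⁻¹ = (2⁻¹ : ℝ) • (1 - M⁻¹) := by
    apply Matrix.inv_eq_right_inv
    have key : (M + 1) * (M - 1)⁻¹ + 1 = (2 : ℝ) • (M * (M - 1)⁻¹) := by
      have : ((2 : ℝ) • (M * (M - 1)⁻¹) - ((M + 1) * (M - 1)⁻¹ + 1)) * (M - 1) = 0 := by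
        rw [sub_mul, Matrix.smul_mul, mul_assoc, hB, add_mul, mul_assoc, hB]
        noncomm_ring
        module
      have h0 := congrArg (fun X => X * (M - 1)⁻¹) this
      simp only [Matrix.zero_mul, mul_assoc, hB'] at h0
      rw [mul_one] at h0
      linear_combination (norm := noncomm_ring) -h0
    rw [key, Matrix.smul_mul, Matrix.mul_smul, smul_smul]
    norm_num
    have h1M : (1 : Matrix (Fin n) (Fin n) ℝ) - M⁻¹ = (M - 1) * M⁻¹ := by
      rw [sub_mul, hM, one_mul]
    rw [h1M, mul_assoc, ← mul_assoc (M-1)⁻¹, hB, one_mul, hM]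
  refine ⟨⟨e1, ?_⟩, ⟨e2, ?_⟩⟩
  · intro i j
    rw [e1]
    simp only [Matrix.smul_apply, Matrix.sub_apply, smul_eq_mul]
    by_cases hij : i = j
    · subst hij
      simp only [Matrix.one_apply_eq]
      nlinarith [hdiag i]
    · simp only [Matrix.one_apply_ne hij, sub_zero]
      nlinarith [hoff i j hij]
  · intro i j
    rw [e2]
    simp only [Matrix.smul_apply, Matrix.sub_apply, smul_eq_mul]
    by_cases hij : i = j
    · subst hij
      simp only [Matrix.one_apply_eq]
      nlinarith [hdiaginv i]
    · simp only [Matrix.one_apply_ne hij, zero_sub]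
      nlinarith [hMinv i j]
end

section
/- Let N be an M-matrix (entrywise nonnegative inverse, nonpositive off-diagonals). Then ρ((I − N)(N + I)⁻¹) < 1, i.e., the spectral radius of (I − N)(N + I)⁻¹ is less than 1. -/
/-!
For small `c > 0` the matrix `T := 1 - c • N` is entrywise nonnegative, and `(1 - T) * c⁻¹ • N⁻¹ = 1`.
Hence the partial sums `∑_{m<k} Tᵐ = (1 - Tᵏ) * c⁻¹ • N⁻¹` are bounded entrywise by `c⁻¹ • N⁻¹`,
the Neumann series of `T` converges and `Tᵏ → 0`. So every eigenvalue of `T` has modulus `< 1`,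
i.e. every (complex) eigenvalue `μ` of `N` has `0 < re μ`. The eigenvalues of the Cayley transform
`(1 - N) * (N + 1)⁻¹` are the numbers `(1 - μ) / (1 + μ)`, and `‖1 - μ‖ < ‖1 + μ‖` when `0 < re μ`.
-/

open scoped ENNReal

open scoped NNReal
open Filter Topology

lemma exists_pos_mul_lt_one {ι : Type*} [Finite ι] (f : ι → ℝ) : ∃ c > 0, ∀ i, c * f i < 1 := by
  have hsmall : ∀ᶠ c in 𝓝[>] (0 : ℝ), ∀ i, c * f i < 1 := eventually_all.2 fun i ↦
    (((continuous_mul_const (f i)).tendsto' 0 0 (zero_mul _)).mono_left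
      nhdsWithin_le_nhds).eventually (eventually_lt_nhds one_pos)
  obtain ⟨c, hc, hc0⟩ := (hsmall.and self_mem_nhdsWithin).exists
  exact ⟨c, hc0, hc⟩

theorem Complex.norm_lt_one_of_mul_one_add_eq_one_sub {z μ : ℂ} (hμ : 0 < μ.re)
    (h : z * (1 + μ) = 1 - μ) : ‖z‖ < 1 := by
  have hlt : ‖1 - μ‖ < ‖1 + μ‖ := by
    rw [← sq_lt_sq₀ (norm_nonneg _) (norm_nonneg _), Complex.sq_norm, Complex.sq_norm,
      Complex.normSq_apply, Complex.normSq_apply]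
    simp only [sub_re, add_re, sub_im, add_im, one_re, one_im]
    nlinarith
  have hpos : 0 < ‖1 + μ‖ := (norm_nonneg _).trans_lt hlt
  rw [← h, norm_mul] at hlt
  exact (mul_lt_iff_lt_one_left hpos).1 hlt

namespace Matrix

variable {ι : Type*} [Fintype ι] [DecidableEq ι]

lemma exists_mulVec_eq_smul_of_mem_spectrum {K : Type*} [Field K] {A : Matrix ι ι K} {μ : K}
    (h : μ ∈ spectrum K A) : ∃ v ≠ 0, A *ᵥ v = μ • v := by
  rw [← spectrum_toLin', ← Module.End.hasEigenvalue_iff_mem_spectrum] at h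
  obtain ⟨v, hv⟩ := h.exists_hasEigenvector
  exact ⟨v, hv.2, by simpa using hv.apply_eq_smul⟩

lemma spectralRadius_lt_of_forall_mulVec_eq_smul {𝕜 : Type*} [NormedField 𝕜] {A : Matrix ι ι 𝕜}
    {r : ℝ≥0} (hr : 0 < r) (h : ∀ (z : 𝕜) (v : ι → 𝕜), v ≠ 0 → A *ᵥ v = z • v → ‖z‖₊ < r) :
    spectralRadius 𝕜 A < r := by
  have hfin := A.finite_spectrum
  rw [spectralRadius, ← hfin.coe_toFinset]
  simp_rw [Finset.mem_coe]
  rw [← Finset.sup_eq_iSup, Finset.sup_lt_iff (by simpa)]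
  intro z hz
  obtain ⟨v, hv, hAv⟩ := exists_mulVec_eq_smul_of_mem_spectrum (hfin.mem_toFinset.1 hz)
  exact_mod_cast h z v hv hAv

lemma norm_lt_one_of_mulVec_eq_smul {𝕜 : Type*} [NormedField 𝕜] {A : Matrix ι ι 𝕜}
    (hA : Tendsto (fun k : ℕ ↦ A ^ k) atTop (𝓝 0)) {μ : 𝕜} {v : ι → 𝕜} (hv : v ≠ 0)
    (hAv : A *ᵥ v = μ • v) : ‖μ‖ < 1 := by
  obtain ⟨i, hi⟩ : ∃ i, v i ≠ 0 := Function.ne_iff.mp hv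
  have hpow : ∀ k : ℕ, A ^ k *ᵥ v = μ ^ k • v := fun k ↦ by
    induction k with
    | zero => simp
    | succ k ih => rw [pow_succ, ← mulVec_mulVec, hAv, mulVec_smul, ih, smul_smul, ← pow_succ']
  have hlim : Tendsto (fun k : ℕ ↦ A ^ k *ᵥ v) atTop (𝓝 (0 *ᵥ v)) :=
    ((continuous_id.matrix_mulVec continuous_const).tendsto 0).comp hA
  simp only [hpow, zero_mulVec] at hlim
  rw [← tendsto_pow_atTop_nhds_zero_iff_norm_lt_one]
  simpa [mul_assoc, hi] using (((continuous_apply i).tendsto 0).comp hlim).mul_const (v i)⁻¹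

lemma tendsto_pow_of_nonneg_of_mul_eq_one {T P : Matrix ι ι ℝ} (hT : ∀ i j, 0 ≤ T i j)
    (hP : ∀ i j, 0 ≤ P i j) (hTP : (1 - T) * P = 1) : Tendsto (fun k : ℕ ↦ T ^ k) atTop (𝓝 0) := by
  have hgeom : ∀ k, ∑ m ∈ Finset.range k, T ^ m = P - T ^ k * P := fun k ↦ by
    rw [← mul_one (∑ m ∈ Finset.range k, T ^ m), ← hTP, ← mul_assoc, geom_sum_mul_neg, sub_mul,
      one_mul]
  refine tendsto_pi_nhds.2 fun i ↦ tendsto_pi_nhds.2 fun j ↦ ?_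
  have hsum_le : ∀ k, ∑ m ∈ Finset.range k, (T ^ m) i j ≤ P i j := fun k ↦ by
    rw [← Matrix.sum_apply, hgeom, sub_apply, sub_le_self_iff]
    exact Finset.sum_nonneg fun l _ ↦ mul_nonneg (pow_apply_nonneg hT k i l) (hP l j)
  exact (summable_of_sum_range_le (fun m ↦ pow_apply_nonneg hT m i j) hsum_le).tendsto_atTop_zero

lemma map_nonsing_inv {R S : Type*} [CommRing R] [CommRing S] (f : R →+* S) {M : Matrix ι ι R}
    (hM : IsUnit M) : M⁻¹.map f = (M.map f)⁻¹ := by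
  refine (inv_eq_left_inv ?_).symm
  rw [← Matrix.map_mul, nonsing_inv_mul M ((isUnit_iff_isUnit_det M).1 hM),
    Matrix.map_one _ f.map_zero f.map_one]

lemma exists_mulVec_eq_smul_of_cayley_mulVec_eq_smul {K : Type*} [Field K] [NeZero (2 : K)]
    {A : Matrix ι ι K} (hA : IsUnit (A + 1)) {z : K} {v : ι → K} (hv : v ≠ 0)
    (h : ((1 - A) * (A + 1)⁻¹) *ᵥ v = z • v) :
    ∃ μ : K, ∃ w ≠ 0, A *ᵥ w = μ • w ∧ z * (1 + μ) = 1 - μ := by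
  rw [← mulVec_mulVec] at h
  set w := (A + 1)⁻¹ *ᵥ v
  have hAw : (A + 1) *ᵥ w = v := by
    rw [mulVec_mulVec, mul_nonsing_inv _ ((isUnit_iff_isUnit_det _).1 hA), one_mulVec]
  have hw : w ≠ 0 := fun h0 ↦ hv (by rw [← hAw, h0, mulVec_zero])
  have hz : (1 + z) • A *ᵥ w = (1 - z) • w := by
    rw [← hAw] at h
    simp only [sub_mulVec, add_mulVec, one_mulVec, smul_add] at h ⊢
    rw [add_smul, sub_smul, one_smul, one_smul]
    linear_combination (norm := module) -h
  have hz1 : 1 + z ≠ 0 := by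
    rintro hz1
    rw [hz1, zero_smul, show 1 - z = 2 by linear_combination -hz1, eq_comm, smul_eq_zero] at hz
    exact hw (hz.resolve_left two_ne_zero)
  refine ⟨(1 - z) / (1 + z), w, hw, ?_, by field_simp; ring⟩
  rw [div_eq_inv_mul, mul_smul, ← hz, smul_smul, inv_mul_cancel₀ hz1, one_smul]

/-- Nonsingular M-matrices, in their characterisation by the sign pattern of `N` and an entrywise
nonnegative inverse. -/
structure IsMMatrix (N : Matrix ι ι ℝ) : Prop where
  isUnit : IsUnit N
  inv_nonneg : ∀ i j, 0 ≤ N⁻¹ i j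
  apply_nonpos_of_ne : ∀ i j, i ≠ j → N i j ≤ 0

namespace IsMMatrix

variable {N : Matrix ι ι ℝ}

lemma re_pos_of_mulVec_eq_smul (hN : N.IsMMatrix) {μ : ℂ} {v : ι → ℂ} (hv : v ≠ 0)
    (hNv : N.map Complex.ofRealHom *ᵥ v = μ • v) : 0 < μ.re := by
  obtain ⟨c, hc, hcN⟩ := exists_pos_mul_lt_one fun i ↦ N i i
  set T := 1 - c • N
  have hT : ∀ i j, 0 ≤ T i j := by
    intro i j
    rcases eq_or_ne i j with rfl | hij
    · simpa [T] using (hcN i).le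
    · simpa [T, one_apply_ne hij] using
        mul_nonpos_of_nonneg_of_nonpos hc.le (hN.apply_nonpos_of_ne i j hij)
  have hTP : (1 - T) * (c⁻¹ • N⁻¹) = 1 := by
    rw [sub_sub_cancel, smul_mul_smul_comm, mul_inv_cancel₀ hc.ne', one_smul,
      mul_nonsing_inv _ ((isUnit_iff_isUnit_det N).1 hN.isUnit)]
  have hTlim := tendsto_pow_of_nonneg_of_mul_eq_one hT
    (fun i j ↦ mul_nonneg (by positivity) (hN.inv_nonneg i j)) hTP
  have hTc : Tendsto (fun k : ℕ ↦ T.map Complex.ofRealHom ^ k) atTop (𝓝 0) := by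
    have hcont : Continuous Complex.ofRealHom := Complex.continuous_ofReal
    simpa [Function.comp_def, Matrix.map_pow] using
      ((continuous_id.matrix_map hcont).tendsto 0).comp hTlim
  have hTv : T.map Complex.ofRealHom *ᵥ v = (1 - c * μ) • v := by
    have hTmap : T.map Complex.ofRealHom = 1 - (c : ℂ) • N.map Complex.ofRealHom := by
      ext i j
      rcases eq_or_ne i j with rfl | hij <;> simp [T, one_apply_ne, *]
    rw [hTmap, sub_mulVec, one_mulVec, smul_mulVec, hNv, smul_smul, sub_smul, one_smul]
  have hre : 1 - c * μ.re < 1 := by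
    simpa using (Complex.re_le_norm _).trans_lt (norm_lt_one_of_mulVec_eq_smul hTc hv hTv)
  nlinarith

lemma isUnit_add_one (hN : N.IsMMatrix) : IsUnit (N + 1) := by
  rw [isUnit_iff_isUnit_det, isUnit_iff_ne_zero]
  intro hdet
  obtain ⟨v, hv, hNv⟩ := exists_mulVec_eq_zero_iff.2 hdet
  rw [add_mulVec, one_mulVec, add_eq_zero_iff_eq_neg] at hNv
  have hvc : Complex.ofRealHom ∘ v ≠ 0 := fun h0 ↦ hv <| funext fun i ↦ by
    simpa using congrFun h0 i
  have hNvc : N.map Complex.ofRealHom *ᵥ (Complex.ofRealHom ∘ v)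
      = (-1 : ℂ) • (Complex.ofRealHom ∘ v) := by
    ext i
    simp [← RingHom.map_mulVec, hNv]
  have := hN.re_pos_of_mulVec_eq_smul hvc hNvc
  norm_num at this

end IsMMatrix

end Matrix

theorem stmt_16 (n : ℕ) (N : Matrix (Fin n) (Fin n) ℝ)
    (hNunit : IsUnit N) (hNinv : ∀ i j, 0 ≤ N⁻¹ i j)
    (hoff : ∀ i j, i ≠ j → N i j ≤ 0) :
    IsUnit (N + 1) ∧ specRad ((1 - N) * (N + 1)⁻¹) < 1 := by
  have hN : N.IsMMatrix := ⟨hNunit, hNinv, hoff⟩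
  have hN1 := hN.isUnit_add_one
  have hadd : (N + 1).map Complex.ofRealHom = N.map Complex.ofRealHom + 1 := by
    simp [Matrix.map_add]
  have hcayley : ((1 - N) * (N + 1)⁻¹).map Complex.ofRealHom
      = (1 - N.map Complex.ofRealHom) * (N.map Complex.ofRealHom + 1)⁻¹ := by
    rw [Matrix.map_mul, Matrix.map_nonsing_inv _ hN1, hadd]
    simp [Matrix.map_sub]
  refine ⟨hN1, ?_⟩
  change spectralRadius ℂ (((1 - N) * (N + 1)⁻¹).map Complex.ofRealHom) < (1 : ℝ≥0)
  rw [hcayley]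
  refine Matrix.spectralRadius_lt_of_forall_mulVec_eq_smul one_pos fun z v hv hzv ↦ ?_
  obtain ⟨μ, w, hw, hNw, hz⟩ := Matrix.exists_mulVec_eq_smul_of_cayley_mulVec_eq_smul
    (hadd ▸ hN1.map Complex.ofRealHom.mapMatrix) hv hzv
  exact_mod_cast Complex.norm_lt_one_of_mul_one_add_eq_one_sub
    (hN.re_pos_of_mulVec_eq_smul hw hNw) hz
end

section
/- For any absolute and monotone matrix norm ‖·‖ on n×n real matrices, max over d with ‖d‖_∞ ≤ 1 of ‖A − diag(d)‖ equals ‖|A| + I‖, where |A| is the entrywise absolute value of A. -/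
theorem stmt_17 (n : ℕ) (A : Matrix (Fin n) (Fin n) ℝ)
    (N : Matrix (Fin n) (Fin n) ℝ → ℝ)
    (habs : ∀ M : Matrix (Fin n) (Fin n) ℝ, N M = N (Matrix.of fun i j => |M i j|))
    (hmono : ∀ M B : Matrix (Fin n) (Fin n) ℝ, (∀ i j, |M i j| ≤ |B i j|) → N M ≤ N B) :
    IsGreatest {r | ∃ d : Fin n → ℝ, ‖d‖ ≤ 1 ∧ r = N (A - Matrix.diagonal d)}
      (N ((Matrix.of fun i j => |A i j|) + 1)) := by
  constructor
  · refine ⟨fun i => if 0 ≤ A i i then -1 else 1, ?_, ?_⟩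
    · apply pi_norm_le_iff_of_nonneg (by norm_num) |>.mpr
      intro i
      by_cases h : 0 ≤ A i i <;> simp [h, Real.norm_eq_abs]
    · rw [habs (A - Matrix.diagonal _)]
      congr 1
      ext i j
      simp only [Matrix.sub_apply, Matrix.add_apply, Matrix.of_apply]
      by_cases hij : i = j
      · subst hij
        rw [Matrix.diagonal_apply_eq, Matrix.one_apply_eq]
        rcases le_or_gt 0 (A i i) with h | h
        · rw [if_pos h, sub_neg_eq_add, abs_of_nonneg h,
            abs_of_nonneg (by linarith : (0:ℝ) ≤ A i i + 1)]
        · rw [if_neg (not_le.mpr h), abs_of_neg h,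
            abs_of_neg (by linarith : A i i - 1 < 0)]
          ring
      · rw [Matrix.diagonal_apply_ne _ hij, Matrix.one_apply_ne hij, sub_zero, add_zero]
  · rintro r ⟨d, hd, rfl⟩
    apply hmono
    intro i j
    have hdi : |d i| ≤ 1 := le_trans (norm_le_pi_norm d i) hd
    simp only [Matrix.sub_apply, Matrix.add_apply, Matrix.of_apply]
    by_cases hij : i = j
    · subst hij
      rw [Matrix.diagonal_apply_eq, Matrix.one_apply_eq,
        abs_of_nonneg (by positivity : (0:ℝ) ≤ |A i i| + 1)]
      calc |A i i - d i| ≤ |A i i| + |d i| := abs_sub _ _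
        _ ≤ |A i i| + 1 := by linarith
    · rw [Matrix.diagonal_apply_ne _ hij, Matrix.one_apply_ne hij, sub_zero, add_zero,
        abs_abs]
end
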